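/- Let (T, φ) be a quasi-Sturmian coloring. Then (T, φ) is of unbounded type if and only if it is uniformly recurrent, i.e., for every n there exists m such that every colored n-ball of φ occurs within the m-ball around every vertex of T. -/

import Mathlib

open SimpleGraph

variable {V A : Type*}

/-- Equivalence of colored `n`-balls: a color-preserving isometry between the balls
of radius `n` centered at `u` and `v`, sending `u` to `v`. -/
def BallEquiv (G : SimpleGraph V) (φ : V → A) (n : ℕ) (u v : V) : Prop :=
  ∃ f : V → V, f u = v ∧
    (∀ x y : V, G.dist u x ≤ n → G.dist u y ≤ n → G.dist (f x) (f y) = G.dist x y) ∧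
    (∀ x : V, G.dist u x ≤ n → φ (f x) = φ x) ∧
    (∀ z : V, G.dist v z ≤ n → ∃ x : V, G.dist u x ≤ n ∧ f x = z)

/-- The factor complexity `b(n)`: the number of classes of colored `n`-balls. -/
noncomputable def complexity (G : SimpleGraph V) (φ : V → A) (n : ℕ) : ℕ :=
  Nat.card (Quot (BallEquiv G φ n))

/-- The colored `n`-ball at `u` is special: it admits two inequivalent `(n+1)`-extensions. -/
def IsSpecialCenter (G : SimpleGraph V) (φ : V → A) (n : ℕ) (u : V) : Prop :=
  ∃ v, BallEquiv G φ n u v ∧ ¬ BallEquiv G φ (n+1) u v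

/-- The type set `Λ_u` of a vertex. -/
def typeSet (G : SimpleGraph V) (φ : V → A) (u : V) : Set ℕ :=
  {n | IsSpecialCenter G φ n u}

/-- Two vertices are in the same class: their colored `n`-balls agree for all `n`. -/
def SameClass (G : SimpleGraph V) (φ : V → A) (u v : V) : Prop :=
  ∀ n, BallEquiv G φ n u v

/-- `m` is the maximal type of `u`. -/
def MaxType (G : SimpleGraph V) (φ : V → A) (u : V) (m : ℕ) : Prop :=
  m ∈ typeSet G φ u ∧ ∀ k ∈ typeSet G φ u, k ≤ m

/-- Weak adjacency of classes of colored `n`-balls (given by representatives `x`, `y`). -/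
def WeakAdj (G : SimpleGraph V) (φ : V → A) (n : ℕ) (x y : V) : Prop :=
  ∃ v w, G.Adj v w ∧ BallEquiv G φ n x v ∧ BallEquiv G φ n y w

/-- Strong adjacency: every ball of the class of `x` has a neighboring ball of the class of `y`. -/
def StrongAdj (G : SimpleGraph V) (φ : V → A) (n : ℕ) (x y : V) : Prop :=
  ∀ v, BallEquiv G φ n x v → ∃ w, G.Adj v w ∧ BallEquiv G φ n y w

/-- The factor graph `𝒢ₙ` on classes of colored `n`-balls. -/
def FactorGraph (G : SimpleGraph V) (φ : V → A) (n : ℕ) :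
    SimpleGraph (Quot (BallEquiv G φ n)) where
  Adj a b := a ≠ b ∧ ∃ u v, G.Adj u v ∧ Quot.mk _ u = a ∧ Quot.mk _ v = b
  symm := by constructor; rintro a b ⟨hne, u, v, h, hu, hv⟩; exact ⟨hne.symm, v, u, h.symm, hv, hu⟩
  loopless := by constructor; rintro a ⟨hne, _⟩; exact hne rfl

/-- The quotient graph `X = Γ\T` on classes of vertices. -/
def QuotGraph (G : SimpleGraph V) (φ : V → A) :
    SimpleGraph (Quot (SameClass G φ)) where
  Adj a b := a ≠ b ∧ ∃ u v, G.Adj u v ∧ Quot.mk _ u = a ∧ Quot.mk _ v = b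
  symm := by constructor; rintro a b ⟨hne, u, v, h, hu, hv⟩; exact ⟨hne.symm, v, u, h.symm, hv, hu⟩
  loopless := by constructor; rintro a ⟨hne, _⟩; exact hne rfl
/-!
If every vertex has infinite type set, then for `M` large every colored `M`-ball `E` is
special at some level `M' ≥ M`, and since `b(M' + 1) = b(M') + 1` the special `M'`-ball is
unique. A non-special class extends uniquely, so weak adjacency of classes is strong
adjacency: any path in the connected factor graph `𝒢_{M'}` from the class of `x` to the
special class lifts to a path in the tree starting at `x`. Bounding the length of such paths
over the finitely many classes shows that `E` occurs at bounded distance from every vertex.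

Conversely, if the type set of `u` is bounded by `N₁`, then any vertex whose `N₁`-ball is
that of `u` has the same colored balls of all radii as `u`. Uniform recurrence puts such a
vertex near every vertex of the tree, so every colored `k`-ball occurs at a vertex of a fixed
ball around `u`, and `b(k)` stays bounded, against `b(k) = k + c`.
-/

def IsUnboundedType (G : SimpleGraph V) (φ : V → A) : Prop :=
  ∀ u : V, (typeSet G φ u).Infinite

def IsUniformlyRecurrent (G : SimpleGraph V) (φ : V → A) : Prop :=
  ∀ n : ℕ, ∃ m : ℕ, ∀ x e : V, ∃ w : V, G.dist x w + n ≤ m ∧ BallEquiv G φ n e w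

theorem Finite.card_add_two_le_of_surjective {α β : Type*} [Finite α] {f : α → β}
    (hf : Function.Surjective f) {x₁ y₁ x₂ y₂ : α} (h₁ : f x₁ = f y₁) (hne₁ : x₁ ≠ y₁)
    (h₂ : f x₂ = f y₂) (hne₂ : x₂ ≠ y₂) (h : f x₁ ≠ f x₂) :
    Nat.card β + 2 ≤ Nat.card α := by
  classical
  have : Fintype α := Fintype.ofFinite α
  have : Fintype β := @Fintype.ofFinite β (Finite.of_surjective f hf)
  have hx : x₁ ≠ x₂ := fun hx => h (congrArg f hx)
  -- the surjection survives deleting `x₁` and `x₂`, as `y₁` and `y₂` still cover their images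
  have hsurj : Set.SurjOn f ↑(Finset.univ \ {x₁, x₂}) ↑(Finset.univ : Finset β) := by
    intro b _
    obtain ⟨a, rfl⟩ := hf b
    have hy₁ : y₁ ≠ x₂ := fun hy => h (h₁.trans (congrArg f hy))
    have hy₂ : y₂ ≠ x₁ := fun hy => h ((congrArg f hy.symm).trans h₂.symm)
    by_cases ha₁ : a = x₁
    · exact ⟨y₁, by simp [hne₁.symm, hy₁], ha₁ ▸ h₁.symm⟩
    by_cases ha₂ : a = x₂
    · exact ⟨y₂, by simp [hne₂.symm, hy₂], ha₂ ▸ h₂.symm⟩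
    exact ⟨a, by simp [ha₁, ha₂], rfl⟩
  have hcard := Finset.card_le_card_of_surjOn f hsurj
  rw [Finset.card_sdiff_of_subset (Finset.subset_univ _), Finset.card_pair hx] at hcard
  simp only [Finset.card_univ, ← Nat.card_eq_fintype_card] at hcard
  have : 2 ≤ Nat.card α := by
    rw [Nat.card_eq_fintype_card, ← Finset.card_pair hx]
    exact Finset.card_le_univ _
  omega

theorem SimpleGraph.Connected.finite_setOf_dist_le {G : SimpleGraph V} [G.LocallyFinite]
    (hc : G.Connected) (u : V) (r : ℕ) : {y : V | G.dist u y ≤ r}.Finite := by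
  induction r with
  | zero => simp [hc.dist_eq_zero_iff]
  | succ r ih =>
    refine (ih.union (ih.biUnion fun w _ => (G.neighborSet w).toFinite)).subset ?_
    intro y hy
    obtain ⟨p, hp⟩ := hc.exists_walk_length_eq_dist y u
    cases p with
    | nil => simp
    | cons hadj q =>
      refine Or.inr (Set.mem_biUnion ?_ hadj.symm)
      have := G.dist_le q
      simp only [Set.mem_ofPred_eq, SimpleGraph.Walk.length_cons] at hp hy ⊢
      rw [G.dist_comm] at hy ⊢
      omega

section BallEquiv

variable {G : SimpleGraph V} {φ : V → A} {n m : ℕ} {u v w : V}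

theorem BallEquiv.refl (n : ℕ) (u : V) : BallEquiv G φ n u u :=
  ⟨id, rfl, fun _ _ _ _ => rfl, fun _ _ => rfl, fun z hz => ⟨z, hz, rfl⟩⟩

theorem BallEquiv.mono (h : BallEquiv G φ m u v) (hnm : n ≤ m) : BallEquiv G φ n u v := by
  obtain ⟨f, hfu, hdist, hcol, hsurj⟩ := h
  refine ⟨f, hfu, fun x y hx hy => hdist x y (hx.trans hnm) (hy.trans hnm),
    fun x hx => hcol x (hx.trans hnm), fun z hz => ?_⟩
  obtain ⟨x, hx, rfl⟩ := hsurj z (hz.trans hnm)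
  have hux := hdist u x (by simp) hx
  rw [hfu] at hux
  exact ⟨x, hux ▸ hz, rfl⟩

theorem BallEquiv.symm (hc : G.Connected) (h : BallEquiv G φ n u v) : BallEquiv G φ n v u := by
  classical
  obtain ⟨f, hfu, hdist, hcol, hsurj⟩ := h
  have hinj : ∀ x y, G.dist u x ≤ n → G.dist u y ≤ n → f x = f y → x = y := by
    intro x y hx hy hxy
    have hxy' := hdist x y hx hy
    rw [hxy, SimpleGraph.dist_self] at hxy'
    exact hc.dist_eq_zero_iff.mp hxy'.symm
  choose g hg hfg using hsurj
  refine ⟨fun z => if hz : G.dist v z ≤ n then g z hz else u, ?_, ?_, ?_, ?_⟩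
  · have hv : G.dist v v ≤ n := by simp
    simp only [dif_pos hv]
    exact hinj _ _ (hg _ _) (by simp) (by rw [hfg, hfu])
  · intro z z' hz hz'
    simp only [dif_pos hz, dif_pos hz']
    rw [← hdist _ _ (hg z hz) (hg z' hz'), hfg, hfg]
  · intro z hz
    simp only [dif_pos hz]
    rw [← hcol _ (hg z hz), hfg]
  · intro x hx
    have hfx : G.dist v (f x) ≤ n := by
      rw [← hfu, hdist u x (by simp) hx]
      exact hx
    exact ⟨f x, hfx, by simp only [dif_pos hfx]; exact hinj _ _ (hg _ _) hx (hfg _ hfx)⟩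

theorem BallEquiv.trans (h₁ : BallEquiv G φ n u v) (h₂ : BallEquiv G φ n v w) :
    BallEquiv G φ n u w := by
  obtain ⟨f, hfu, hdf, hcf, hsf⟩ := h₁
  obtain ⟨g, hgv, hdg, hcg, hsg⟩ := h₂
  have hmaps : ∀ x, G.dist u x ≤ n → G.dist v (f x) ≤ n := by
    intro x hx
    rw [← hfu, hdf u x (by simp) hx]
    exact hx
  refine ⟨g ∘ f, by simp [hfu, hgv], fun x y hx hy => ?_, fun x hx => ?_, fun z hz => ?_⟩
  · simp only [Function.comp_apply]
    rw [hdg _ _ (hmaps x hx) (hmaps y hy), hdf x y hx hy]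
  · simp only [Function.comp_apply]
    rw [hcg _ (hmaps x hx), hcf x hx]
  · obtain ⟨y, hy, rfl⟩ := hsg z hz
    obtain ⟨x, hx, rfl⟩ := hsf y hy
    exact ⟨x, hx, rfl⟩

theorem ballEquiv_equivalence (hc : G.Connected) (φ : V → A) (n : ℕ) :
    Equivalence (BallEquiv G φ n) :=
  ⟨BallEquiv.refl n, BallEquiv.symm hc, BallEquiv.trans⟩

theorem quot_mk_ballEquiv_eq_iff (hc : G.Connected) :
    Quot.mk (BallEquiv G φ n) u = Quot.mk (BallEquiv G φ n) v ↔ BallEquiv G φ n u v := by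
  rw [Quot.eq, (ballEquiv_equivalence hc φ n).eqvGen_iff]

theorem BallEquiv.exists_ballEquiv_of_dist_le (hc : G.Connected) {s : ℕ}
    (h : BallEquiv G φ (n + s) u v) {p : V} (hp : G.dist u p ≤ s) :
    ∃ q, G.dist v q = G.dist u p ∧ BallEquiv G φ n p q := by
  obtain ⟨f, hfu, hdist, hcol, hsurj⟩ := h
  have hcenter : G.dist v (f p) = G.dist u p := by
    rw [← hfu, hdist u p (by simp) (by omega)]
  have hball : ∀ x, G.dist p x ≤ n → G.dist u x ≤ n + s := fun x hx => by
    have := hc.dist_triangle (u := u) (v := p) (w := x)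
    omega
  refine ⟨f p, hcenter, f, rfl, fun x y hx hy => hdist x y (hball x hx) (hball y hy),
    fun x hx => hcol x (hball x hx), fun z hz => ?_⟩
  have hvz : G.dist v z ≤ n + s := by
    have := hc.dist_triangle (u := v) (v := f p) (w := z)
    omega
  obtain ⟨x, hx, rfl⟩ := hsurj z hvz
  rw [hdist p x (by omega) hx] at hz
  exact ⟨x, hz, rfl⟩

theorem BallEquiv.succ_of_not_isSpecialCenter (h : BallEquiv G φ n u v)
    (hns : ¬ IsSpecialCenter G φ n u) : BallEquiv G φ (n + 1) u v := by
  by_contra hv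
  exact hns ⟨v, h, hv⟩

theorem BallEquiv.sameClass_of_not_isSpecialCenter (h : BallEquiv G φ n u v)
    (hns : ∀ k, n ≤ k → ¬ IsSpecialCenter G φ k u) : SameClass G φ u v := by
  intro k
  rcases le_total k n with hk | hk
  · exact h.mono hk
  · induction k, hk using Nat.le_induction with
    | base => exact h
    | succ k hk ih => exact ih.succ_of_not_isSpecialCenter (hns k hk)

theorem strongAdj_of_not_isSpecialCenter (hc : G.Connected) (hns : ¬ IsSpecialCenter G φ n u)
    (huv : G.Adj u v) : StrongAdj G φ n u v := by
  intro u' hu'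
  have huv₁ : G.dist u v ≤ 1 := (G.dist_eq_one_iff_adj.mpr huv).le
  obtain ⟨w, hw, hvw⟩ :=
    (hu'.succ_of_not_isSpecialCenter hns).exists_ballEquiv_of_dist_le hc huv₁
  exact ⟨w, G.dist_eq_one_iff_adj.mp (hw.trans (G.dist_eq_one_iff_adj.mpr huv)), hvw⟩

end BallEquiv

section FactorGraph

variable {G : SimpleGraph V} {φ : V → A}

/-- Two special `k`-balls would have two `(k+1)`-extensions each, so `b(k+1) ≥ b(k) + 2`. -/
theorem ballEquiv_of_isSpecialCenter (hc : G.Connected) {k : ℕ}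
    [Finite (Quot (BallEquiv G φ (k + 1)))]
    (hcard : complexity G φ (k + 1) ≤ complexity G φ k + 1) {a b : V}
    (ha : IsSpecialCenter G φ k a) (hb : IsSpecialCenter G φ k b) : BallEquiv G φ k a b := by
  by_contra hab
  obtain ⟨a', haa', hna⟩ := ha
  obtain ⟨b', hbb', hnb⟩ := hb
  let restrict : Quot (BallEquiv G φ (k + 1)) → Quot (BallEquiv G φ k) :=
    Quot.map id fun _ _ h => h.mono k.le_succ
  have hrestrict : Function.Surjective restrict := Quot.ind fun x => ⟨Quot.mk _ x, rfl⟩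
  have := Finite.card_add_two_le_of_surjective hrestrict
    (x₁ := Quot.mk _ a) (y₁ := Quot.mk _ a') (x₂ := Quot.mk _ b) (y₂ := Quot.mk _ b')
    ((quot_mk_ballEquiv_eq_iff hc).mpr haa') (mt (quot_mk_ballEquiv_eq_iff hc).mp hna)
    ((quot_mk_ballEquiv_eq_iff hc).mpr hbb') (mt (quot_mk_ballEquiv_eq_iff hc).mp hnb)
    (mt (quot_mk_ballEquiv_eq_iff hc).mp hab)
  unfold complexity at hcard
  omega

theorem factorGraph_preconnected (hc : G.Connected) (φ : V → A) (n : ℕ) :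
    (FactorGraph G φ n).Preconnected := by
  refine Quot.ind fun x => Quot.ind fun y => ?_
  obtain ⟨p⟩ := hc x y
  induction p with
  | nil => rfl
  | @cons x z y hxz p ih =>
    by_cases hmk : Quot.mk (BallEquiv G φ n) x = Quot.mk _ z
    · rwa [hmk]
    · have hadj : (FactorGraph G φ n).Adj (Quot.mk _ x) (Quot.mk _ z) := ⟨hmk, x, z, hxz, rfl, rfl⟩
      exact hadj.reachable.trans ih

variable {M : ℕ} {t : Quot (BallEquiv G φ M)}

/-- Non-special classes extend uniquely, so each step of the walk can be followed in the tree
from the current vertex, unless that vertex already lies in the special class `t`. -/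
theorem exists_dist_le_length_of_factorGraph_walk (hc : G.Connected)
    (hspecial : ∀ z, IsSpecialCenter G φ M z → Quot.mk _ z = t) {a b : Quot (BallEquiv G φ M)}
    (W : (FactorGraph G φ M).Walk a b) (x : V) (hx : Quot.mk _ x = a) :
    ∃ w, G.dist x w ≤ W.length ∧ (Quot.mk _ w = b ∨ Quot.mk _ w = t) := by
  induction W generalizing x with
  | nil => exact ⟨x, by simp, Or.inl hx⟩
  | cons hadj W ih =>
    by_cases hxt : Quot.mk (BallEquiv G φ M) x = t
    · exact ⟨x, by simp, Or.inr hxt⟩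
    obtain ⟨-, u, v, huv, rfl, rfl⟩ := hadj
    have hns : ¬ IsSpecialCenter G φ M u := fun hu => hxt (hx.trans (hspecial u hu))
    obtain ⟨w, hxw, hvw⟩ :=
      strongAdj_of_not_isSpecialCenter hc hns huv x ((quot_mk_ballEquiv_eq_iff hc).mp hx.symm)
    obtain ⟨w', hww', hw'⟩ := ih w ((quot_mk_ballEquiv_eq_iff hc).mpr (hvw.symm hc))
    refine ⟨w', ?_, hw'⟩
    have := hc.dist_triangle (u := x) (v := w) (w := w')
    rw [G.dist_eq_one_iff_adj.mpr hxw] at this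
    change G.dist x w' ≤ W.length + 1
    omega

theorem exists_bound_dist_quot_mk_eq (hc : G.Connected) [Finite (Quot (BallEquiv G φ M))]
    (hspecial : ∀ z, IsSpecialCenter G φ M z → Quot.mk _ z = t) :
    ∃ L, ∀ x, ∃ w, G.dist x w ≤ L ∧ Quot.mk _ w = t := by
  obtain ⟨L, hL⟩ := (Set.finite_range fun a => (FactorGraph G φ M).dist a t).bddAbove
  refine ⟨L, fun x => ?_⟩
  obtain ⟨W, hW⟩ :=
    (factorGraph_preconnected hc φ M (Quot.mk _ x) t).exists_walk_length_eq_dist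
  obtain ⟨w, hxw, hw⟩ := exists_dist_le_length_of_factorGraph_walk hc hspecial W x rfl
  exact ⟨w, hxw.trans (hW ▸ hL (Set.mem_range_self _)), hw.elim id id⟩

end FactorGraph

section QuasiSturmian

variable {G : SimpleGraph V} {φ : V → A} {N₀ c n : ℕ}

theorem exists_bound_ballEquiv_of_forall (hc : G.Connected) [Finite (Quot (BallEquiv G φ n))]
    (h : ∀ e, ∃ L, ∀ x, ∃ w, G.dist x w ≤ L ∧ BallEquiv G φ n e w) :
    ∃ L, ∀ x e, ∃ w, G.dist x w ≤ L ∧ BallEquiv G φ n e w := by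
  choose L hL using fun q : Quot (BallEquiv G φ n) => h q.out
  obtain ⟨B, hB⟩ := (Set.finite_range L).bddAbove
  refine ⟨B, fun x e => ?_⟩
  obtain ⟨w, hxw, hw⟩ := hL (Quot.mk _ e) x
  have he : BallEquiv G φ n e (Quot.mk _ e).out :=
    (quot_mk_ballEquiv_eq_iff hc).mp (Quot.out_eq _).symm
  exact ⟨w, hxw.trans (hB (Set.mem_range_self _)), he.trans hw⟩

theorem finite_quot_ballEquiv_of_complexity_eq (hQS : ∀ n, N₀ ≤ n → complexity G φ n = n + c)
    (hn : N₀ ≤ n) (hpos : 0 < n) : Finite (Quot (BallEquiv G φ n)) := by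
  have : 0 < complexity G φ n := by
    rw [hQS n hn]
    omega
  exact (Nat.card_pos_iff.mp this).2

theorem exists_bound_ballEquiv_of_isSpecialCenter (hc : G.Connected)
    (hQS : ∀ n, N₀ ≤ n → complexity G φ n = n + c) (hn : N₀ ≤ n) (hpos : 0 < n) {e : V}
    (he : IsSpecialCenter G φ n e) : ∃ L, ∀ x, ∃ w, G.dist x w ≤ L ∧ BallEquiv G φ n e w := by
  have := finite_quot_ballEquiv_of_complexity_eq hQS hn hpos
  have := finite_quot_ballEquiv_of_complexity_eq hQS (n := n + 1) (by omega) (by omega)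
  have hspecial : ∀ z, IsSpecialCenter G φ n z → Quot.mk _ z = Quot.mk _ e := fun z hz =>
    (quot_mk_ballEquiv_eq_iff hc).mpr <| ballEquiv_of_isSpecialCenter hc
      (by rw [hQS n hn, hQS (n + 1) (by omega)]; omega) hz he
  obtain ⟨L, hL⟩ := exists_bound_dist_quot_mk_eq hc hspecial
  exact ⟨L, fun x => (hL x).imp fun w ⟨hxw, hw⟩ =>
    ⟨hxw, ((quot_mk_ballEquiv_eq_iff hc).mp hw).symm hc⟩⟩

theorem IsUnboundedType.isUniformlyRecurrent (hc : G.Connected)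
    (hQS : ∀ n, N₀ ≤ n → complexity G φ n = n + c) (hU : IsUnboundedType G φ) :
    IsUniformlyRecurrent G φ := by
  intro n
  set n' := max n (max N₀ 1)
  have := finite_quot_ballEquiv_of_complexity_eq hQS (n := n') (by omega) (by omega)
  obtain ⟨L, hL⟩ : ∃ L, ∀ x e, ∃ w, G.dist x w ≤ L ∧ BallEquiv G φ n' e w := by
    refine exists_bound_ballEquiv_of_forall hc fun e => ?_
    obtain ⟨M, hM, hn'M⟩ := (hU e).exists_gt n'
    obtain ⟨L, hL⟩ := exists_bound_ballEquiv_of_isSpecialCenter hc hQS (by omega) (by omega) hM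
    exact ⟨L, fun x => (hL x).imp fun w ⟨hxw, hw⟩ => ⟨hxw, hw.mono hn'M.le⟩⟩
  refine ⟨L + n, fun x e => ?_⟩
  obtain ⟨w, hxw, hw⟩ := hL x e
  exact ⟨w, by omega, hw.mono (by omega)⟩

theorem complexity_le_card_of_forall_sameClass (hc : G.Connected) [G.LocallyFinite] {u : V}
    {m : ℕ} (h : ∀ y, ∃ w, SameClass G φ u w ∧ G.dist w y ≤ m) (k : ℕ) :
    complexity G φ k ≤ Nat.card {y : V | G.dist u y ≤ m} := by
  have := (hc.finite_setOf_dist_le u m).to_subtype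
  refine Nat.card_le_card_of_surjective
    (fun y : {y : V | G.dist u y ≤ m} => Quot.mk (BallEquiv G φ k) y.1) (Quot.ind fun y => ?_)
  obtain ⟨w, huw, hwy⟩ := h y
  obtain ⟨q, hq, hyq⟩ := ((huw (k + m)).symm hc).exists_ballEquiv_of_dist_le hc hwy
  have hq' : G.dist u q ≤ m := hq ▸ hwy
  exact ⟨⟨q, hq'⟩, (quot_mk_ballEquiv_eq_iff hc).mpr (hyq.symm hc)⟩

theorem IsUniformlyRecurrent.isUnboundedType (hc : G.Connected) [G.LocallyFinite]
    (hQS : ∀ n, N₀ ≤ n → complexity G φ n = n + c) (hUR : IsUniformlyRecurrent G φ) :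
    IsUnboundedType G φ := by
  intro u
  by_contra hfin
  obtain ⟨N₁, hN₁⟩ := (Set.not_infinite.mp hfin).bddAbove
  obtain ⟨m, hm⟩ := hUR (N₁ + 1)
  have hnear : ∀ y, ∃ w, SameClass G φ u w ∧ G.dist w y ≤ m := fun y => by
    obtain ⟨w, hyw, huw⟩ := hm y u
    refine ⟨w, huw.sameClass_of_not_isSpecialCenter fun k hk hs => ?_, ?_⟩
    · have := hN₁ hs
      omega
    · rw [G.dist_comm]
      omega
  have hbound :=
    complexity_le_card_of_forall_sameClass hc hnear (N₀ + Nat.card {y | G.dist u y ≤ m} + 1)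
  rw [hQS _ (by omega)] at hbound
  omega

end QuasiSturmian

theorem unbounded_type_iff_uniformly_recurrent_general {V A : Type*} (G : SimpleGraph V)
    [G.LocallyFinite] (φ : V → A)
    (htree : G.IsTree)
    (N₀ c : ℕ) (hQS : ∀ n, N₀ ≤ n → complexity G φ n = n + c) :
    (∀ u : V, (typeSet G φ u).Infinite) ↔
      (∀ n : ℕ, ∃ m : ℕ, ∀ x e : V, ∃ w : V,
        G.dist x w + n ≤ m ∧ BallEquiv G φ n e w) :=
  ⟨IsUnboundedType.isUniformlyRecurrent htree.connected hQS,
    IsUniformlyRecurrent.isUnboundedType htree.connected hQS⟩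

/-- A quasi-Sturmian coloring is of unbounded type iff it is uniformly recurrent: for
every `n` there is `m` such that every class of colored `n`-balls occurs within the
`m`-ball around every vertex. -/
theorem unbounded_type_iff_uniformly_recurrent {V A : Type*} (G : SimpleGraph V)
    [G.LocallyFinite] (φ : V → A) [Finite A] (d : ℕ) (hd : 2 ≤ d)
    (htree : G.IsTree) (hreg : ∀ v : V, G.degree v = d)
    (hsurj : Function.Surjective φ)
    (N₀ c : ℕ) (hQS : ∀ n, N₀ ≤ n → complexity G φ n = n + c) :
    (∀ u : V, (typeSet G φ u).Infinite) ↔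
      (∀ n : ℕ, ∃ m : ℕ, ∀ x e : V, ∃ w : V,
        G.dist x w + n ≤ m ∧ BallEquiv G φ n e w) :=
  unbounded_type_iff_uniformly_recurrent_general G φ htree N₀ c hQS
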